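/- For odd n = 2k+1 with k ≥ 2, define h = 2(s_k - 1) and weights a_0 = a_1 = a_2 = 1, a_{2i-1} = h/(2 s_{k+1-i}) and a_{2i} = h/s_{k+1-i} for 2 ≤ i ≤ k-1, a_{n-2} = h/6, a_{n-1} = h/4, a_n = h/3, where s_j is the Sylvester sequence. Then a_0 + a_1 + ... + a_n = h. -/

import Mathlib

def sylvester : ℕ → ℕ
  | 0 => 2
  | n + 1 => sylvester n * (sylvester n - 1) + 1

/-!
With `P = s_k - 1 = h / 2`, the two middle weights attached to `s_j` add up to `3 P / s_j`.
Since `s_{j+1} - 1 = s_j (s_j - 1)`, induction gives the Egyptian-fraction identity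
`∑_{j<k} 1 / s_j = 1 - 1 / P` in the integral form `∑_{j<k} P / s_j = P - 1`; splitting off
`P / s_0 + P / s_1 = P / 2 + P / 3` leaves `∑_{2≤j<k} P / s_j = P / 6 - 1`, and the total is
`3 + 3 (P / 6 - 1) + P / 3 + P / 2 + 2 P / 3 = 2 P`.
-/

open Finset

theorem Finset.sum_range_two_mul_add_one {M : Type*} [AddCommMonoid M] (f : ℕ → M) (m : ℕ) :
    ∑ j ∈ range (2 * m + 1), f j = f 0 + ∑ i ∈ range m, (f (2 * i + 1) + f (2 * i + 2)) := by
  induction m with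
  | zero => simp
  | succ m ih =>
    rw [show 2 * (m + 1) + 1 = 2 * m + 1 + 1 + 1 by ring, sum_range_succ, sum_range_succ, ih,
      sum_range_succ, add_assoc, add_assoc]

theorem two_le_sylvester (k : ℕ) : 2 ≤ sylvester k := by
  induction k with
  | zero => rfl
  | succ k ih =>
    have hprod : sylvester k * (sylvester k - 1) ≠ 0 := Nat.mul_ne_zero (by omega) (by omega)
    exact Nat.succ_le_succ (Nat.one_le_iff_ne_zero.2 hprod)

theorem sylvester_succ_sub_one (k : ℕ) :
    sylvester (k + 1) - 1 = sylvester k * (sylvester k - 1) :=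
  Nat.add_sub_cancel _ _

theorem sylvester_sub_one_eq_prod (k : ℕ) :
    sylvester k - 1 = ∏ j ∈ range k, sylvester j := by
  induction k with
  | zero => rfl
  | succ k ih => rw [prod_range_succ, ← ih, sylvester_succ_sub_one, Nat.mul_comm]

theorem sylvester_dvd_sylvester_sub_one {j k : ℕ} (hjk : j < k) :
    sylvester j ∣ sylvester k - 1 := by
  rw [sylvester_sub_one_eq_prod]
  exact dvd_prod_of_mem _ (mem_range.2 hjk)

theorem sum_sylvester_sub_one_div_sylvester (k : ℕ) :
    ∑ j ∈ range k, (sylvester k - 1) / sylvester j = sylvester k - 2 := by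
  induction k with
  | zero => rfl
  | succ k ih =>
    have hs := two_le_sylvester k
    have hterm : ∀ j ∈ range k, (sylvester (k + 1) - 1) / sylvester j
        = sylvester k * ((sylvester k - 1) / sylvester j) := fun j hj => by
      rw [sylvester_succ_sub_one]
      exact Nat.mul_div_assoc _ (sylvester_dvd_sylvester_sub_one (mem_range.1 hj))
    rw [sum_range_succ, sum_congr rfl hterm, ← mul_sum, ih, sylvester_succ_sub_one,
      Nat.mul_div_cancel_left _ (by omega)]
    change _ = sylvester k * (sylvester k - 1) + 1 - 2
    obtain ⟨t, ht⟩ : ∃ t, sylvester k = t + 2 := ⟨_, (Nat.sub_add_cancel hs).symm⟩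
    rw [ht, Nat.add_sub_cancel, show t + 2 - 1 = t + 1 from rfl, mul_add_one]
    omega

theorem two_mul_div_two_mul_add_two_mul_div {P s : ℕ} (hsP : s ∣ P) :
    2 * P / (2 * s) + 2 * P / s = 3 * (P / s) := by
  rw [Nat.mul_div_mul_left _ _ two_pos, Nat.mul_div_assoc _ hsP]
  ring

theorem large_volume_weights_sum (k : ℕ) (hk : 2 ≤ k)
    (n : ℕ) (hn : n = 2 * k + 1)
    (h : ℕ) (hh : h = 2 * (sylvester k - 1))
    (a : ℕ → ℕ)
    (ha012 : ∀ j ≤ 2, a j = 1)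
    (haodd : ∀ i, 2 ≤ i → i ≤ k - 1 → a (2 * i - 1) = h / (2 * sylvester (k + 1 - i)))
    (haeven : ∀ i, 2 ≤ i → i ≤ k - 1 → a (2 * i) = h / sylvester (k + 1 - i))
    (han2 : a (n - 2) = h / 6)
    (han1 : a (n - 1) = h / 4)
    (han : a n = h / 3) :
    ∑ j ∈ Finset.range (n + 1), a j = h := by
  obtain ⟨m, rfl⟩ : ∃ m, k = m + 2 := ⟨k - 2, by omega⟩
  subst hn hh
  set P := sylvester (m + 2) - 1
  have hP : 1 ≤ P := Nat.le_sub_of_add_le (two_le_sylvester _)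
  have h2 : 2 ∣ P := sylvester_dvd_sylvester_sub_one (j := 0) (by omega)
  have h3 : 3 ∣ P := sylvester_dvd_sylvester_sub_one (j := 1) (by omega)
  have hkey : P / 2 + P / 3 + ∑ j ∈ range m, P / sylvester (j + 2) = P - 1 := by
    have hsum := sum_sylvester_sub_one_div_sylvester (m + 2)
    rw [sum_range_succ', sum_range_succ'] at hsum
    change ∑ j ∈ range m, P / sylvester (j + 2) + P / 3 + P / 2 = P + 1 - 2 at hsum
    omega
  have hpair : ∀ i ∈ range m, a (2 * (i + 1) + 1) + a (2 * (i + 1) + 2)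
      = 3 * (P / sylvester (m - 1 - i + 2)) := fun i hi => by
    have hi := mem_range.1 hi
    rw [show 2 * (i + 1) + 1 = 2 * (i + 2) - 1 by omega,
      show 2 * (i + 1) + 2 = 2 * (i + 2) by omega,
      haodd (i + 2) (by omega) (by omega), haeven (i + 2) (by omega) (by omega),
      show m + 2 + 1 - (i + 2) = m - 1 - i + 2 by omega]
    exact two_mul_div_two_mul_add_two_mul_div (sylvester_dvd_sylvester_sub_one (by omega))
  rw [sum_range_succ, sum_range_two_mul_add_one, sum_range_succ, sum_range_succ',
    sum_congr rfl hpair, ← mul_sum, sum_range_reflect (fun j => P / sylvester (j + 2)),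
    ha012 0 (by omega), ha012 (2 * 0 + 1) (by omega), ha012 (2 * 0 + 2) (by omega),
    show 2 * (m + 1) + 1 = 2 * (m + 2) + 1 - 2 by omega, han2,
    show 2 * (m + 1) + 2 = 2 * (m + 2) + 1 - 1 by omega, han1, han]
  omega
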